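/- Let G be a K5-minor-free bridgeless chordal graph with at least one edge, and assume the cut monoid M_G is normal. Then the element (2, …, 2, 4) of ℤ^E × ℤ (all edge-coordinates equal to 2, last coordinate 4) lies in int(M_G), no element of int(M_G) has last coordinate less than or equal to 3, and consequently if int(M_G) = y + M_G for some y ∈ int(M_G), then int(M_G) = (2, …, 2, 4) + M_G. -/

import Mathlib

/-! Basic definitions for cut monoids of finite simple graphs. -/

open Classical in
/-- The cut vector of a vertex set `A`, as a function on `Sym2 V`:
value `1` on pairs with exactly one element in `A`, and `0` otherwise. -/
noncomputable def cutVec {V : Type} (A : Set V) : Sym2 V → ℤ :=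
  Sym2.lift ⟨fun v w => if ((v ∈ A) ↔ (w ∈ A)) then 0 else 1,
    fun v w => if_congr iff_comm rfl rfl⟩

variable {V : Type}

/-- The generators `(δ_A, 1)` of the cut monoid of `G`. -/
def cutGens (G : SimpleGraph V) : Set ((G.edgeSet → ℤ) × ℤ) :=
  {p | ∃ A : Set V, p = (fun e => cutVec A e.1, 1)}

/-- The cut monoid `M_G` of a graph `G`. -/
def cutMonoid (G : SimpleGraph V) : AddSubmonoid ((G.edgeSet → ℤ) × ℤ) :=
  AddSubmonoid.closure (cutGens G)

/-- The group `gp(M_G)` generated by the cut monoid. -/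
def cutGroup (G : SimpleGraph V) : AddSubgroup ((G.edgeSet → ℤ) × ℤ) :=
  AddSubgroup.closure (cutGens G)

/-- `M_G` is normal: every `x ∈ gp(M_G)` with `n • x ∈ M_G` for some `n ≥ 1` lies in `M_G`. -/
def CutNormal (G : SimpleGraph V) : Prop :=
  ∀ x ∈ cutGroup G, (∃ n : ℕ, 1 ≤ n ∧ n • x ∈ cutMonoid G) → x ∈ cutMonoid G

/-- `M_G` is seminormal: every `x ∈ gp(M_G)` with `2 • x ∈ M_G` and `3 • x ∈ M_G`
lies in `M_G`. -/
def CutSeminormal (G : SimpleGraph V) : Prop :=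
  ∀ x ∈ cutGroup G, 2 • x ∈ cutMonoid G → 3 • x ∈ cutMonoid G → x ∈ cutMonoid G

/-- Generators of the cone of `M_G`: nonnegative real multiples of the `(δ_A, 1)`. -/
noncomputable def cutConeGens (G : SimpleGraph V) : Set ((G.edgeSet → ℝ) × ℝ) :=
  {q | ∃ (c : ℝ) (A : Set V), 0 ≤ c ∧
    q = c • ((fun e => ((cutVec A e.1 : ℤ) : ℝ), (1 : ℝ)))}

/-- The cone `cone(M_G)`: all finite nonnegative real combinations of the `(δ_A, 1)`. -/
noncomputable def cutCone (G : SimpleGraph V) : Set ((G.edgeSet → ℝ) × ℝ) :=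
  (AddSubmonoid.closure (cutConeGens G) : Set ((G.edgeSet → ℝ) × ℝ))

/-- The canonical map from `ℤ^E × ℤ` to `ℝ^E × ℝ`. -/
noncomputable def toRealCut (G : SimpleGraph V) (p : (G.edgeSet → ℤ) × ℤ) :
    (G.edgeSet → ℝ) × ℝ :=
  (fun e => ((p.1 e : ℤ) : ℝ), ((p.2 : ℤ) : ℝ))

/-- `int(M_G)`: elements of `M_G` mapping into the topological interior of `cone(M_G)`. -/
noncomputable def cutInterior (G : SimpleGraph V) : Set ((G.edgeSet → ℤ) × ℤ) :=
  {p | p ∈ cutMonoid G ∧ toRealCut G p ∈ interior (cutCone G)}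

/-- The set of last coordinates `α ∈ ℕ` realized by elements of `int(M_G)`;
its least element is `m(G)`. -/
noncomputable def cutDegrees (G : SimpleGraph V) : Set ℕ :=
  {α | ∃ x : G.edgeSet → ℤ, ((x, (α : ℤ)) : (G.edgeSet → ℤ) × ℤ) ∈ cutInterior G}

/-- `H` is a minor of `G`: branch sets `B u` are nonempty, pairwise disjoint,
induce connected subgraphs, and edges of `H` are witnessed by edges of `G`. -/
def GraphMinor {W V : Type} (H : SimpleGraph W) (G : SimpleGraph V) : Prop :=
  ∃ B : W → Set V,
    (∀ u, (B u).Nonempty) ∧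
    (∀ u v, u ≠ v → Disjoint (B u) (B v)) ∧
    (∀ u, (G.induce (B u)).Connected) ∧
    (∀ u v, H.Adj u v → ∃ a ∈ B u, ∃ b ∈ B v, G.Adj a b)

/-- `G` is `K₅`-minor-free. -/
def K5Free (G : SimpleGraph V) : Prop :=
  ¬ GraphMinor (⊤ : SimpleGraph (Fin 5)) G

/-- `G` is bipartite: vertices split into two parts so every edge joins the parts. -/
def BipartiteG (G : SimpleGraph V) : Prop :=
  ∃ s : Set V, ∀ ⦃v w⦄, G.Adj v w → ((v ∈ s ∧ w ∉ s) ∨ (w ∈ s ∧ v ∉ s))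

/-- `G` has an induced cycle of length `n` (n ≥ 3): an induced-subgraph copy of the
cycle graph of length `n`. -/
def HasInducedCycleLen (G : SimpleGraph V) (n : ℕ) : Prop :=
  3 ≤ n ∧ Nonempty (SimpleGraph.cycleGraph n ↪g G)

/-- `G` contains a triangle. -/
def HasTriangle (G : SimpleGraph V) : Prop :=
  ∃ a b c, G.Adj a b ∧ G.Adj b c ∧ G.Adj a c

/-- `G` is chordal: every induced cycle is a triangle. -/
def ChordalG (G : SimpleGraph V) : Prop :=
  ∀ n, HasInducedCycleLen G n → n = 3

/-- `G` is bridgeless: every edge lies on some cycle. -/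
def BridgelessG (G : SimpleGraph V) : Prop :=
  ∀ e ∈ G.edgeSet, ∃ (v : V) (c : G.Walk v v), c.IsCycle ∧ e ∈ c.edges

/-- `G` is (isomorphic to) a cycle of length `n`. -/
def IsCycleOfLen (G : SimpleGraph V) (n : ℕ) : Prop :=
  3 ≤ n ∧ Nonempty (G ≃g SimpleGraph.cycleGraph n)

/-- `G` is a cycle. -/
def IsCycleGraph (G : SimpleGraph V) : Prop :=
  ∃ n, IsCycleOfLen G n

/-- `G` is a `0`-sum of `G1` and `G2`: copies of `G1`, `G2` cover `G`,
overlap in exactly one vertex, and every edge comes from `G1` or `G2`. -/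
def IsZeroSumDecomp {V1 V2 : Type} (G : SimpleGraph V) (G1 : SimpleGraph V1)
    (G2 : SimpleGraph V2) : Prop :=
  ∃ (f1 : V1 ↪ V) (f2 : V2 ↪ V),
    Set.range f1 ∪ Set.range f2 = Set.univ ∧
    (∃ v, Set.range f1 ∩ Set.range f2 = {v}) ∧
    (∀ a b, G.Adj a b ↔
      ((∃ x y, f1 x = a ∧ f1 y = b ∧ G1.Adj x y) ∨
       (∃ x y, f2 x = a ∧ f2 y = b ∧ G2.Adj x y)))

/-- `G` is a `1`-sum of `G1` and `G2` along a common edge. -/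
def IsOneSumDecomp {V1 V2 : Type} (G : SimpleGraph V) (G1 : SimpleGraph V1)
    (G2 : SimpleGraph V2) : Prop :=
  ∃ (f1 : V1 ↪ V) (f2 : V2 ↪ V) (v w : V),
    v ≠ w ∧
    Set.range f1 ∪ Set.range f2 = Set.univ ∧
    Set.range f1 ∩ Set.range f2 = {v, w} ∧
    (∃ x y, f1 x = v ∧ f1 y = w ∧ G1.Adj x y) ∧
    (∃ x y, f2 x = v ∧ f2 y = w ∧ G2.Adj x y) ∧
    (∀ a b, G.Adj a b ↔
      ((∃ x y, f1 x = a ∧ f1 y = b ∧ G1.Adj x y) ∨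
       (∃ x y, f2 x = a ∧ f2 y = b ∧ G2.Adj x y)))

/-- Ring graphs: obtained, up to adding isolated vertices, from finitely many
(finite) trees and cycles by iterated `0`-sums and `1`-sums. -/
inductive IsRingGraph : {V : Type} → SimpleGraph V → Prop
  | tree {V : Type} (G : SimpleGraph V) :
      Finite V → G.Connected → G.IsAcyclic → IsRingGraph G
  | cycle {V : Type} (G : SimpleGraph V) : IsCycleGraph G → IsRingGraph G
  | zeroSum {V1 V2 V : Type} {G1 : SimpleGraph V1} {G2 : SimpleGraph V2}
      {G : SimpleGraph V} :
      IsRingGraph G1 → IsRingGraph G2 → IsZeroSumDecomp G G1 G2 → IsRingGraph G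
  | oneSum {V1 V2 V : Type} {G1 : SimpleGraph V1} {G2 : SimpleGraph V2}
      {G : SimpleGraph V} :
      IsRingGraph G1 → IsRingGraph G2 → IsOneSumDecomp G G1 G2 → IsRingGraph G
  | addIsolated {V W : Type} {G : SimpleGraph V} {H : SimpleGraph W} (f : V ↪ W) :
      IsRingGraph G → (∀ a b, H.Adj a b ↔ ∃ x y, f x = a ∧ f y = b ∧ G.Adj x y) →
      IsRingGraph H

/-- An edge of an induced subgraph is an edge of the ambient graph. -/
lemma induce_edge_mem (G : SimpleGraph V) (s : Set V) (e : Sym2 s)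
    (he : e ∈ (G.induce s).edgeSet) : e.map Subtype.val ∈ G.edgeSet := by
  induction e using Sym2.ind with
  | _ a b =>
    rw [Sym2.map_pair_eq, SimpleGraph.mem_edgeSet]
    exact he

/-- Restriction of a vector indexed by the edges of `G` to the edges of the
subgraph of `G` induced on `s`. -/
noncomputable def restrictCut (G : SimpleGraph V) (s : Set V) (p : G.edgeSet → ℤ) :
    (G.induce s).edgeSet → ℤ :=
  fun e => p ⟨e.1.map Subtype.val, induce_edge_mem G s e.1 e.2⟩

/-! Summing the cut generators over all vertex sets gives `2 ^ (|V| - 2) • (2, …, 2, 4)`, and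
`(2, …, 2, 4)` is an integer combination of the singleton cuts and the empty cut; so normality puts
it in `M_G`. Since the cut generators span `ℝ^E × ℝ`, this strictly positive combination of all of
them is an interior point of the cone.

A shortest cycle is induced, so a bridgeless chordal graph with an edge has a triangle. On a
triangle with edge values `x₁, x₂, x₃` and last coordinate `α`, every interior point satisfies the
strict triangle inequalities and `x₁ + x₂ + x₃ < 2α`, and every element of `M_G` has even
`x₁ + x₂ + x₃`; hence `α ≥ 4` on `int(M_G)`. Finally, writing `(2, …, 2, 4) = y + m` with `y`
interior forces `m` to have last coordinate `0`, i.e. `m = 0`. -/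

lemma linearCombination_mem_interior_image_nonneg {ι M : Type*} [Fintype ι] [AddCommGroup M]
    [Module ℝ M] [TopologicalSpace M] [IsTopologicalAddGroup M] [ContinuousSMul ℝ M] [T2Space M]
    [FiniteDimensional ℝ M] {v : ι → M} (hv : Submodule.span ℝ (Set.range v) = ⊤)
    {c : ι → ℝ} (hc : ∀ i, 0 < c i) :
    Fintype.linearCombination ℝ v c ∈
      interior (Fintype.linearCombination ℝ v '' {c | ∀ i, 0 ≤ c i}) := by
  have hsurj : Function.Surjective (Fintype.linearCombination ℝ v) := by
    rw [← LinearMap.range_eq_top, Fintype.range_linearCombination, hv]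
  have hpos : IsOpen {c : ι → ℝ | ∀ i, 0 < c i} := by
    simpa only [Set.ofPred_forall] using
      isOpen_iInter_of_finite fun i => isOpen_lt continuous_const (continuous_apply i)
  exact interior_maximal (Set.image_mono fun c hc i => (hc i).le)
    ((Fintype.linearCombination ℝ v).isOpenMap_of_finiteDimensional hsurj _ hpos) ⟨c, hc, rfl⟩

lemma LinearMap.pos_of_mem_interior {E : Type*} [AddCommGroup E] [Module ℝ E]
    [TopologicalSpace E] [IsTopologicalAddGroup E] [ContinuousSMul ℝ E] {S : Set E}
    (ψ : E →ₗ[ℝ] ℝ) (hS : ∀ x ∈ S, 0 ≤ ψ x) {w : E} (hw : 0 < ψ w) {q : E}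
    (hq : q ∈ interior S) : 0 < ψ q := by
  have hcont : Continuous fun t : ℝ => q - t • w := by fun_prop
  have hnear : ∀ᶠ t in nhdsWithin (0 : ℝ) (Set.Ioi 0), q - t • w ∈ S :=
    nhdsWithin_le_nhds <| hcont.continuousAt.preimage_mem_nhds <| by
      simpa using mem_interior_iff_mem_nhds.1 hq
  obtain ⟨t, hts, ht⟩ := (hnear.and self_mem_nhdsWithin).exists
  have := hS _ hts
  rw [map_sub, map_smul, smul_eq_mul] at this
  nlinarith [mul_pos (Set.mem_Ioi.1 ht) hw]

namespace SimpleGraph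

variable {G : SimpleGraph V}

lemma cycleGraph_adj_iff_val {n : ℕ} (hn : 2 ≤ n) {i j : Fin n} :
    (cycleGraph n).Adj i j ↔ i.val + 1 = j.val ∨ j.val + 1 = i.val ∨
      (i.val = 0 ∧ j.val + 1 = n) ∨ (j.val = 0 ∧ i.val + 1 = n) := by
  have hsub : ∀ a b : Fin n,
      (a - b).val = 1 ↔ b.val + 1 = a.val ∨ (a.val = 0 ∧ b.val + 1 = n) := by
    intro a b
    have := a.isLt
    have := b.isLt
    rcases le_or_gt b a with hba | hab
    · rw [Fin.coe_sub_iff_le.2 hba]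
      have : b.val ≤ a.val := hba
      omega
    · rw [Fin.coe_sub_iff_lt.2 hab]
      have : a.val < b.val := hab
      omega
  rw [cycleGraph_adj', hsub, hsub]
  omega

namespace Walk

variable {u : V} {c : G.Walk u u}

lemma IsCycle.exists_isCycle_of_adj_getVert (hc : c.IsCycle) {i j : ℕ} (hij : i + 2 ≤ j)
    (hj : j < c.length) (hadj : G.Adj (c.getVert j) (c.getVert i)) :
    ∃ (v : V) (w : G.Walk v v), w.IsCycle ∧ w.length = j - i + 1 := by
  let p : G.Walk (c.getVert i) (c.getVert j) :=
    ((c.drop i).take (j - i)).copy rfl (by rw [drop_getVert, Nat.add_sub_cancel' (by omega)])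
  have hp_length : p.length = j - i := by simp [p]; omega
  have hp_getVert : ∀ k, p.getVert k = c.getVert (i + min (j - i) k) := by simp [p]
  have hp : p.IsPath := by
    rw [← IsPath.getVert_injOn_iff]
    intro k hk l hl hkl
    simp only [Set.mem_ofPred_eq, hp_length] at hk hl
    rw [hp_getVert, hp_getVert] at hkl
    have := hc.getVert_injOn' (by simp; omega) (by simp; omega) hkl
    omega
  refine ⟨_, cons hadj p, (cons_isCycle_iff p hadj).2 ⟨hp, fun hmem => ?_⟩, by simp [hp_length]⟩
  have hsnd := hp.eq_snd_of_mem_edges (Sym2.eq_swap ▸ hmem)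
  rw [snd, hp_getVert] at hsnd
  have := hc.getVert_injOn' (by simp; omega) (by simp; omega) hsnd
  omega

lemma IsCycle.adj_getVert_of_length_eq_girth (hc : c.IsCycle) (hgirth : c.length = G.girth)
    {i j : ℕ} (hij : i < j) (hj : j < c.length) (hadj : G.Adj (c.getVert i) (c.getVert j)) :
    j = i + 1 ∨ (i = 0 ∧ j + 1 = c.length) := by
  by_contra hchord
  obtain ⟨v, w, hw, hwlen⟩ := hc.exists_isCycle_of_adj_getVert (by omega) hj hadj.symm
  have := girth_le_length hw
  omega

lemma adj_getVert_of_cyclic_succ {i j : ℕ} (hi : i < c.length)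
    (hij : i + 1 = j ∨ (j = 0 ∧ i + 1 = c.length)) : G.Adj (c.getVert i) (c.getVert j) := by
  rcases hij with rfl | ⟨rfl, hlen⟩
  · exact c.adj_getVert_succ hi
  · simpa [hlen] using c.adj_getVert_succ hi

def IsCycle.cycleGraphEmbedding (hc : c.IsCycle) (hgirth : c.length = G.girth) :
    cycleGraph c.length ↪g G where
  toFun i := c.getVert i
  inj' i j hij := Fin.ext (hc.getVert_injOn' (by simp; omega) (by simp; omega) hij)
  map_rel_iff' {i j} := by
    have h3 := hc.three_le_length
    have hi := i.isLt
    have hj := j.isLt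
    rw [cycleGraph_adj_iff_val (by omega)]
    constructor
    · intro hadj
      rcases lt_trichotomy i.val j.val with hij | hij | hij
      · have := hc.adj_getVert_of_length_eq_girth hgirth hij hj hadj
        omega
      · exact absurd (Fin.ext hij ▸ hadj) (G.irrefl)
      · have := hc.adj_getVert_of_length_eq_girth hgirth hij hi hadj.symm
        omega
    · rintro (h | h | h | h)
      · exact adj_getVert_of_cyclic_succ hi (Or.inl h)
      · exact (adj_getVert_of_cyclic_succ hj (Or.inl h)).symm
      · exact (adj_getVert_of_cyclic_succ hj (Or.inr h)).symm
      · exact adj_getVert_of_cyclic_succ hi (Or.inr h)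

end Walk

end SimpleGraph

section Chordal

variable {G : SimpleGraph V}

lemma BridgelessG.not_isAcyclic (hbl : BridgelessG G) (hedge : G.edgeSet.Nonempty) :
    ¬ G.IsAcyclic := by
  obtain ⟨e, he⟩ := hedge
  obtain ⟨v, c, hc, -⟩ := hbl e he
  exact fun hG => hG c hc

lemma ChordalG.girth_eq_three (hch : ChordalG G) (hG : ¬ G.IsAcyclic) : G.girth = 3 := by
  obtain ⟨u, c, hc, hlen⟩ := SimpleGraph.exists_girth_eq_length.2 hG
  rw [hlen]
  exact hch c.length ⟨hc.three_le_length, ⟨hc.cycleGraphEmbedding hlen.symm⟩⟩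

lemma ChordalG.hasTriangle (hch : ChordalG G) (hG : ¬ G.IsAcyclic) : HasTriangle G := by
  obtain ⟨u, c, hc, hlen⟩ := SimpleGraph.exists_girth_eq_length.2 hG
  have h3 : c.length = 3 := hlen ▸ hch.girth_eq_three hG
  exact ⟨c.getVert 0, c.getVert 1, c.getVert 2, c.adj_getVert_succ (by omega),
    c.adj_getVert_succ (by omega),
    (SimpleGraph.Walk.adj_getVert_of_cyclic_succ (by omega) (Or.inr ⟨rfl, h3.symm⟩)).symm⟩

end Chordal

open Classical in
lemma cutVec_mk (A : Set V) (u v : V) :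
    cutVec A s(u, v) = if (u ∈ A ↔ v ∈ A) then 0 else 1 := rfl

lemma cutVec_empty (e : Sym2 V) : cutVec ∅ e = 0 := by
  induction e using Sym2.ind with
  | _ u v => simp [cutVec_mk]

lemma cutVec_triangle (A : Set V) (a b c : V) :
    (cutVec A s(a, b) = 0 ∧ cutVec A s(b, c) = 0 ∧ cutVec A s(a, c) = 0) ∨
    (cutVec A s(a, b) = 1 ∧ cutVec A s(b, c) = 0 ∧ cutVec A s(a, c) = 1) ∨
    (cutVec A s(a, b) = 1 ∧ cutVec A s(b, c) = 1 ∧ cutVec A s(a, c) = 0) ∨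
    (cutVec A s(a, b) = 0 ∧ cutVec A s(b, c) = 1 ∧ cutVec A s(a, c) = 1) := by
  by_cases ha : a ∈ A <;> by_cases hb : b ∈ A <;> by_cases hc : c ∈ A <;>
    simp [cutVec_mk, ha, hb, hc]

lemma cutVec_singleton_add_singleton_sub_pair [DecidableEq V] {u v x y : V} (huv : u ≠ v)
    (hxy : x ≠ y) :
    cutVec {u} s(x, y) + cutVec {v} s(x, y) - cutVec {u, v} s(x, y) =
      if s(x, y) = s(u, v) then 2 else 0 := by
  by_cases hxu : x = u <;> by_cases hxv : x = v <;> by_cases hyu : y = u <;>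
    by_cases hyv : y = v <;> simp_all [cutVec_mk]

lemma sum_cutVec_singleton [Fintype V] {u v : V} (huv : u ≠ v) :
    ∑ w : V, cutVec {w} s(u, v) = 2 := by
  classical
  have h : ∀ w : V, cutVec {w} s(u, v) = (if u = w then 1 else 0) + (if v = w then 1 else 0) := by
    intro w
    by_cases hu : u = w <;> by_cases hv : v = w <;> simp [cutVec_mk, hu, hv]
    exact huv (hu.trans hv.symm)
  simp [h, Finset.sum_add_distrib]

lemma sum_cutVec_finset [Fintype V] {u v : V} (huv : u ≠ v) :
    ∑ F : Finset V, cutVec (F : Set V) s(u, v) = 2 ^ (Fintype.card V - 1) := by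
  classical
  -- toggling `u` is an involution exchanging the finsets that separate `u`, `v` with the others
  let σ : Equiv.Perm (Finset V) := (symmDiff_left_involutive ({u} : Finset V)).toPerm
  have hσ : ∀ F : Finset V, cutVec (F : Set V) s(u, v) + cutVec (σ F : Set V) s(u, v) = 1 := by
    intro F
    by_cases hu : u ∈ F <;> by_cases hv : v ∈ F <;>
      simp [cutVec_mk, σ, Finset.coe_symmDiff, Set.mem_symmDiff, hu, hv, huv.symm]
  have hsum : 2 * ∑ F : Finset V, cutVec (F : Set V) s(u, v) = 2 ^ Fintype.card V := by
    rw [two_mul]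
    nth_rw 2 [← Equiv.sum_comp σ]
    rw [← Finset.sum_add_distrib, Finset.sum_congr rfl fun F _ => hσ F]
    simp [Fintype.card_finset]
  have hcard : Fintype.card V = Fintype.card V - 1 + 1 := by
    have := Fintype.card_pos_iff.2 ⟨u⟩
    omega
  rw [hcard, pow_succ] at hsum
  linarith

noncomputable def cutGen (G : SimpleGraph V) (A : Set V) : (G.edgeSet → ℤ) × ℤ :=
  (fun e => cutVec A e.1, 1)

lemma cutGen_mem_cutMonoid (G : SimpleGraph V) (A : Set V) : cutGen G A ∈ cutMonoid G :=
  AddSubmonoid.subset_closure ⟨A, rfl⟩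

lemma cutGen_mem_cutGroup (G : SimpleGraph V) (A : Set V) : cutGen G A ∈ cutGroup G :=
  AddSubgroup.subset_closure ⟨A, rfl⟩

section Fintype

variable [Fintype V] (G : SimpleGraph V)

lemma sum_cutGen_singleton :
    ∑ w : V, cutGen G {w} = (fun _ => 2, (Fintype.card V : ℤ)) := by
  ext ⟨e, he⟩
  · induction e using Sym2.ind with
    | _ u v => simp [Prod.fst_sum, cutGen, sum_cutVec_singleton (G.ne_of_adj he)]
  · simp [Prod.snd_sum, cutGen]

lemma sum_cutGen_finset :
    ∑ F : Finset V, cutGen G F = (fun _ => 2 ^ (Fintype.card V - 1), 2 ^ Fintype.card V) := by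
  ext ⟨e, he⟩
  · induction e using Sym2.ind with
    | _ u v => simp [Prod.fst_sum, cutGen, sum_cutVec_finset (G.ne_of_adj he)]
  · simp [Prod.snd_sum, cutGen, Fintype.card_finset]

lemma two_four_mem_cutGroup : ((fun _ => 2, 4) : (G.edgeSet → ℤ) × ℤ) ∈ cutGroup G := by
  have h : ((fun _ => 2, 4) : (G.edgeSet → ℤ) × ℤ) =
      ∑ w : V, cutGen G {w} + (4 - Fintype.card V : ℤ) • cutGen G ∅ := by
    rw [sum_cutGen_singleton]
    ext e <;> simp [cutGen, cutVec_empty]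
  rw [h]
  exact add_mem (sum_mem fun w _ => cutGen_mem_cutGroup G _)
    (zsmul_mem (cutGen_mem_cutGroup G _) _)

lemma two_pow_smul_two_four [Nontrivial V] :
    2 ^ (Fintype.card V - 2) • ((fun _ => 2, 4) : (G.edgeSet → ℤ) × ℤ) =
      ∑ F : Finset V, cutGen G F := by
  have hV : Fintype.card V = Fintype.card V - 2 + 2 := by
    have := Fintype.one_lt_card (α := V)
    omega
  rw [sum_cutGen_finset]
  ext e
  · simp only [Prod.smul_fst, Pi.smul_apply]
    rw [hV]
    simp [pow_succ]
  · simp only [Prod.smul_snd]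
    rw [hV]
    simp [pow_succ]
    ring

lemma CutNormal.two_four_mem_cutMonoid [Nontrivial V] (hnorm : CutNormal G) :
    ((fun _ => 2, 4) : (G.edgeSet → ℤ) × ℤ) ∈ cutMonoid G :=
  hnorm _ (two_four_mem_cutGroup G) ⟨_, Nat.one_le_two_pow, by
    rw [two_pow_smul_two_four]
    exact sum_mem fun F _ => cutGen_mem_cutMonoid G _⟩

end Fintype

noncomputable def toRealCutHom (G : SimpleGraph V) :
    ((G.edgeSet → ℤ) × ℤ) →+ ((G.edgeSet → ℝ) × ℝ) :=
  ((Int.castAddHom ℝ).compLeft G.edgeSet).prodMap (Int.castAddHom ℝ)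

lemma coe_toRealCutHom (G : SimpleGraph V) : ⇑(toRealCutHom G) = toRealCut G := rfl

lemma toRealCut_cutGen (G : SimpleGraph V) (A : Set V) :
    toRealCut G (cutGen G A) = (fun e => ((cutVec A e.1 : ℤ) : ℝ), (1 : ℝ)) := by
  simp [toRealCut, cutGen]

lemma smul_toRealCut_cutGen_mem_cutCone (G : SimpleGraph V) {c : ℝ} (hc : 0 ≤ c) (A : Set V) :
    c • toRealCut G (cutGen G A) ∈ cutCone G :=
  AddSubmonoid.subset_closure ⟨c, A, hc, by rw [toRealCut_cutGen]⟩

lemma pi_single_edge_eq_cutGen_combination [DecidableEq V] (G : SimpleGraph V) {u v : V}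
    (he : s(u, v) ∈ G.edgeSet) :
    ((Pi.single ⟨s(u, v), he⟩ 1 : G.edgeSet → ℝ), (0 : ℝ)) = (1 / 2 : ℝ) •
      (toRealCut G (cutGen G ({u} : Finset V)) + toRealCut G (cutGen G ({v} : Finset V)) -
        toRealCut G (cutGen G ({u, v} : Finset V)) - toRealCut G (cutGen G (∅ : Finset V))) := by
  ext ⟨e, he'⟩
  · induction e using Sym2.ind with
    | _ x y =>
      have h := congrArg (Int.cast : ℤ → ℝ)
        (cutVec_singleton_add_singleton_sub_pair (G.ne_of_adj he) (G.ne_of_adj he'))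
      push_cast at h
      simp only [toRealCut, cutGen, Finset.coe_singleton, Finset.coe_insert, Finset.coe_empty,
        cutVec_empty, Pi.single_apply, Subtype.ext_iff, Prod.smul_fst, Prod.fst_sub,
        Prod.fst_add, Pi.smul_apply, Pi.sub_apply, Pi.add_apply, Int.cast_zero, sub_zero, h,
        smul_eq_mul]
      split_ifs <;> norm_num
  · simp [toRealCut, cutGen]

lemma span_toRealCut_cutGen [Finite V] (G : SimpleGraph V) :
    Submodule.span ℝ (Set.range fun F : Finset V => toRealCut G (cutGen G F)) = ⊤ := by
  classical
  set S := Submodule.span ℝ (Set.range fun F : Finset V => toRealCut G (cutGen G F))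
  have hgen : ∀ F : Finset V, toRealCut G (cutGen G F) ∈ S :=
    fun F => Submodule.subset_span ⟨F, rfl⟩
  have hsnd : ((0 : G.edgeSet → ℝ), (1 : ℝ)) ∈ S := by
    simpa [toRealCut, cutGen, cutVec_empty, Pi.zero_def] using hgen ∅
  have hfst : ∀ e : G.edgeSet, ((Pi.single e 1 : G.edgeSet → ℝ), (0 : ℝ)) ∈ S := by
    rintro ⟨e, he⟩
    induction e using Sym2.ind with
    | _ u v =>
      rw [pi_single_edge_eq_cutGen_combination G he]
      exact S.smul_mem _ (S.sub_mem (S.sub_mem (S.add_mem (hgen _) (hgen _)) (hgen _)) (hgen _))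
  have := Fintype.ofFinite G.edgeSet
  refine Submodule.eq_top_iff'.2 fun ⟨x, α⟩ => ?_
  have hx : ((x, α) : (G.edgeSet → ℝ) × ℝ) =
      ∑ e, x e • ((Pi.single e 1 : G.edgeSet → ℝ), (0 : ℝ)) +
        α • ((0 : G.edgeSet → ℝ), (1 : ℝ)) := by
    ext e <;> simp [Prod.fst_sum, Prod.snd_sum, Pi.single_apply]
  rw [hx]
  exact S.add_mem (S.sum_mem fun e _ => S.smul_mem _ (hfst e)) (S.smul_mem _ hsnd)

lemma cutCone_nonneg (G : SimpleGraph V) {ψ : ((G.edgeSet → ℝ) × ℝ) →ₗ[ℝ] ℝ}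
    (hψ : ∀ A : Set V, 0 ≤ ψ (toRealCut G (cutGen G A))) : ∀ q ∈ cutCone G, 0 ≤ ψ q := by
  intro q hq
  induction hq using AddSubmonoid.closure_induction with
  | mem q hq =>
    obtain ⟨c, A, hc, rfl⟩ := hq
    rw [← toRealCut_cutGen, map_smul, smul_eq_mul]
    exact mul_nonneg hc (hψ A)
  | zero => simp
  | add x y _ _ hx hy => simpa using add_nonneg hx hy

lemma toRealCut_mem_interior_cutCone [Fintype V] (G : SimpleGraph V) {x : (G.edgeSet → ℤ) × ℤ}
    {k : ℕ} (hk : k ≠ 0) (hx : k • x = ∑ F : Finset V, cutGen G F) :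
    toRealCut G x ∈ interior (cutCone G) := by
  set v := fun F : Finset V => toRealCut G (cutGen G F)
  have hx' : toRealCut G x = Fintype.linearCombination ℝ v fun _ => (k : ℝ)⁻¹ := by
    rw [Fintype.linearCombination_apply, ← Finset.smul_sum]
    simp only [v, ← coe_toRealCutHom, ← map_sum, ← hx, map_nsmul]
    rw [← Nat.cast_smul_eq_nsmul ℝ, inv_smul_smul₀ (Nat.cast_ne_zero.2 hk)]
  rw [hx']
  refine interior_mono ?_ (linearCombination_mem_interior_image_nonneg (span_toRealCut_cutGen G)
    fun _ => by positivity)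
  rintro _ ⟨c, hc, rfl⟩
  rw [Fintype.linearCombination_apply]
  exact sum_mem fun F _ => smul_toRealCut_cutGen_mem_cutCone G (hc F) _

section Triangle

variable {G : SimpleGraph V} {a b c : V} (hab : G.Adj a b) (hbc : G.Adj b c) (hac : G.Adj a c)

lemma even_triangle_of_mem_cutMonoid {p : (G.edgeSet → ℤ) × ℤ} (hp : p ∈ cutMonoid G) :
    Even (p.1 ⟨s(a, b), hab⟩ + p.1 ⟨s(b, c), hbc⟩ + p.1 ⟨s(a, c), hac⟩) := by
  induction hp using AddSubmonoid.closure_induction with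
  | mem x hx =>
    obtain ⟨A, rfl⟩ := hx
    rcases cutVec_triangle A a b c with h | h | h | h <;> simp [h.1, h.2.1, h.2.2]
  | zero => simp
  | add x y _ _ hx hy =>
    simpa only [Prod.fst_add, Pi.add_apply, add_add_add_comm] using hx.add hy

/-- `h₀`, `ha`, `hb`, `hc` say that the inequality holds at the restrictions to the triangle of
the cuts `∅`, `{a}`, `{b}`, `{c}`, hence on the whole cone; `hpos` says that it is strict at
`(1, …, 1, 2)`. -/
lemma triangle_ineq_of_mem_interior {k₁ k₂ k₃ k₀ : ℤ} (h₀ : 0 ≤ k₀) (ha : 0 ≤ k₁ + k₃ + k₀)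
    (hb : 0 ≤ k₁ + k₂ + k₀) (hc : 0 ≤ k₂ + k₃ + k₀) (hpos : 0 < k₁ + k₂ + k₃ + 2 * k₀)
    {p : (G.edgeSet → ℤ) × ℤ} (hp : toRealCut G p ∈ interior (cutCone G)) :
    0 < k₁ * p.1 ⟨s(a, b), hab⟩ + k₂ * p.1 ⟨s(b, c), hbc⟩ + k₃ * p.1 ⟨s(a, c), hac⟩ +
      k₀ * p.2 := by
  let ψ : ((G.edgeSet → ℝ) × ℝ) →ₗ[ℝ] ℝ :=
    (k₁ : ℝ) • (LinearMap.proj ⟨s(a, b), hab⟩ ∘ₗ LinearMap.fst ℝ _ _) +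
    (k₂ : ℝ) • (LinearMap.proj ⟨s(b, c), hbc⟩ ∘ₗ LinearMap.fst ℝ _ _) +
    (k₃ : ℝ) • (LinearMap.proj ⟨s(a, c), hac⟩ ∘ₗ LinearMap.fst ℝ _ _) +
    (k₀ : ℝ) • LinearMap.snd ℝ _ _
  have hψ : ∀ q, ψ q = k₁ * q.1 ⟨s(a, b), hab⟩ + k₂ * q.1 ⟨s(b, c), hbc⟩ +
      k₃ * q.1 ⟨s(a, c), hac⟩ + k₀ * q.2 := fun q => by simp [ψ]
  have hgen : ∀ A : Set V, 0 ≤ ψ (toRealCut G (cutGen G A)) := by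
    intro A
    rw [hψ, toRealCut_cutGen]
    have h₀' : (0 : ℝ) ≤ k₀ := by exact_mod_cast h₀
    have ha' : (0 : ℝ) ≤ k₁ + k₃ + k₀ := by exact_mod_cast ha
    have hb' : (0 : ℝ) ≤ k₁ + k₂ + k₀ := by exact_mod_cast hb
    have hc' : (0 : ℝ) ≤ k₂ + k₃ + k₀ := by exact_mod_cast hc
    rcases cutVec_triangle A a b c with h | h | h | h <;>
      simp only [h.1, h.2.1, h.2.2, Int.cast_zero, Int.cast_one] <;> linarith
  have hw : 0 < ψ (fun _ => 1, 2) := by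
    rw [hψ]
    have : (0 : ℝ) < k₁ + k₂ + k₃ + 2 * k₀ := by exact_mod_cast hpos
    linarith
  have := LinearMap.pos_of_mem_interior ψ (cutCone_nonneg G hgen) hw hp
  rw [hψ] at this
  simp only [toRealCut] at this
  exact_mod_cast this

end Triangle

lemma HasTriangle.four_le_snd_of_mem_cutInterior {G : SimpleGraph V} (hT : HasTriangle G)
    {p : (G.edgeSet → ℤ) × ℤ} (hp : p ∈ cutInterior G) : 4 ≤ p.2 := by
  obtain ⟨a, b, c, hab, hbc, hac⟩ := hT
  obtain ⟨hpM, hpI⟩ := hp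
  have h₁ := triangle_ineq_of_mem_interior hab hbc hac (k₁ := -1) (k₂ := 1) (k₃ := 1) (k₀ := 0)
    le_rfl (by norm_num) (by norm_num) (by norm_num) (by norm_num) hpI
  have h₂ := triangle_ineq_of_mem_interior hab hbc hac (k₁ := 1) (k₂ := -1) (k₃ := 1) (k₀ := 0)
    le_rfl (by norm_num) (by norm_num) (by norm_num) (by norm_num) hpI
  have h₃ := triangle_ineq_of_mem_interior hab hbc hac (k₁ := 1) (k₂ := 1) (k₃ := -1) (k₀ := 0)
    le_rfl (by norm_num) (by norm_num) (by norm_num) (by norm_num) hpI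
  have h₄ := triangle_ineq_of_mem_interior hab hbc hac (k₁ := -1) (k₂ := -1) (k₃ := -1) (k₀ := 2)
    (by norm_num) (by norm_num) (by norm_num) (by norm_num) (by norm_num) hpI
  obtain ⟨m, hm⟩ := even_triangle_of_mem_cutMonoid hab hbc hac hpM
  -- the strict triangle inequalities force the even perimeter to be at least 6
  omega

lemma eq_zero_or_one_le_snd_of_mem_cutMonoid {G : SimpleGraph V} {p : (G.edgeSet → ℤ) × ℤ}
    (hp : p ∈ cutMonoid G) : p = 0 ∨ 1 ≤ p.2 := by
  induction hp using AddSubmonoid.closure_induction with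
  | mem x hx =>
    obtain ⟨A, rfl⟩ := hx
    exact Or.inr le_rfl
  | zero => exact Or.inl rfl
  | add x y _ _ hx hy =>
    rcases hx with rfl | hx
    · simpa using hy
    · rcases hy with rfl | hy
      · simpa using Or.inr hx
      · exact Or.inr (by simp only [Prod.snd_add]; omega)

theorem chordal_gorenstein_generator_general {V : Type} [Fintype V] (G : SimpleGraph V)
    (hbl : BridgelessG G) (hch : ChordalG G)
    (hedge : G.edgeSet.Nonempty) (hnorm : CutNormal G) :
    (((fun _ => 2, 4) : (G.edgeSet → ℤ) × ℤ) ∈ cutInterior G) ∧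
    (∀ p ∈ cutInterior G, ¬ p.2 ≤ 3) ∧
    ∀ y ∈ cutInterior G,
      cutInterior G = (fun m => y + m) '' (cutMonoid G : Set ((G.edgeSet → ℤ) × ℤ)) →
      cutInterior G =
        (fun m => ((fun _ => 2, 4) : (G.edgeSet → ℤ) × ℤ) + m) ''
          (cutMonoid G : Set ((G.edgeSet → ℤ) × ℤ)) := by
  have hT : HasTriangle G := hch.hasTriangle (hbl.not_isAcyclic hedge)
  have : Nontrivial V := by
    obtain ⟨a, b, -, hab, -⟩ := hT
    exact hab.nontrivial
  have hmem : ((fun _ => 2, 4) : (G.edgeSet → ℤ) × ℤ) ∈ cutInterior G :=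
    ⟨hnorm.two_four_mem_cutMonoid,
      toRealCut_mem_interior_cutCone G (pow_ne_zero _ two_ne_zero) (two_pow_smul_two_four G)⟩
  refine ⟨hmem, fun p hp => not_le.2 (hT.four_le_snd_of_mem_cutInterior hp), fun y hy hint => ?_⟩
  obtain ⟨m, hm, hym⟩ := hint ▸ hmem
  have hm0 : m = 0 := by
    refine (eq_zero_or_one_le_snd_of_mem_cutMonoid hm).resolve_right fun h => ?_
    have hy4 := hT.four_le_snd_of_mem_cutInterior hy
    have h4 : y.2 + m.2 = 4 := congrArg Prod.snd hym
    omega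
  obtain rfl : y = (fun _ => 2, 4) := by simpa [hm0] using hym
  exact hint

/-- For a `K₅`-minor-free bridgeless chordal graph with at least one
edge whose cut monoid is normal, `(2,…,2,4)` lies in `int(M_G)`, no element of
`int(M_G)` has last coordinate `≤ 3`, and if `int(M_G) = y + M_G` for some
`y ∈ int(M_G)` then `int(M_G) = (2,…,2,4) + M_G`. -/
theorem chordal_gorenstein_generator {V : Type} [Fintype V] (G : SimpleGraph V)
    (hK5 : K5Free G) (hbl : BridgelessG G) (hch : ChordalG G)
    (hedge : G.edgeSet.Nonempty) (hnorm : CutNormal G) :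
    (((fun _ => 2, 4) : (G.edgeSet → ℤ) × ℤ) ∈ cutInterior G) ∧
    (∀ p ∈ cutInterior G, ¬ p.2 ≤ 3) ∧
    ∀ y ∈ cutInterior G,
      cutInterior G = (fun m => y + m) '' (cutMonoid G : Set ((G.edgeSet → ℤ) × ℤ)) →
      cutInterior G =
        (fun m => ((fun _ => 2, 4) : (G.edgeSet → ℤ) × ℤ) + m) ''
          (cutMonoid G : Set ((G.edgeSet → ℤ) × ℤ)) :=
  chordal_gorenstein_generator_general G hbl hch hedge hnorm
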